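/- Let N ≥ 1, let W̄, V̄ ∈ ℂ^{N×N} be Hermitian, l̂ ∈ ℂ^N, I ∈ ℝ, and let υ > 0. Then the robust interference constraint 'for every Δl ∈ ℂ^N with Δlᴴ Δl ≤ υ², writing l = l̂ + Δl, one has lᴴ (W̄ + V̄) l ≤ I' holds if and only if there exists ω ≥ 0 such that the (N+1)×(N+1) Hermitian matrix [[ω I_N − V̄, −V̄ l̂],[−l̂ᴴ V̄, −ω υ² + I − l̂ᴴ V̄ l̂]] − U_l̂ᴴ W̄ U_l̂ is positive semidefinite, where U_l̂ = [I_N l̂] ∈ ℂ^{N×(N+1)}. -/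

import Mathlib

open Matrix
open scoped ComplexOrder

/-- `U_l̂ = [I_N  l̂]`, the `N×(N+1)` matrix whose first `N` columns form `I_N` and whose last
column is `l̂`. -/
noncomputable def Ul {N : ℕ} (lhat : Fin N → ℂ) : Matrix (Fin N) (Fin N ⊕ Unit) ℂ :=
  Matrix.fromCols (1 : Matrix (Fin N) (Fin N) ℂ) (Matrix.replicateCol Unit lhat)

/-- The LMI matrix `[[ω I_N − V̄, −V̄ l̂],[−l̂ᴴ V̄, −ω υ² + I − l̂ᴴ V̄ l̂]] − U_l̂ᴴ W̄ U_l̂`. -/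
noncomputable def SC11 {N : ℕ} (W V : Matrix (Fin N) (Fin N) ℂ) (lhat : Fin N → ℂ)
    (I ω υ : ℝ) : Matrix (Fin N ⊕ Unit) (Fin N ⊕ Unit) ℂ :=
  Matrix.fromBlocks
    ((ω : ℂ) • (1 : Matrix (Fin N) (Fin N) ℂ) - V)
    (Matrix.replicateCol Unit (-(V *ᵥ lhat)))
    (Matrix.replicateRow Unit (-(star lhat ᵥ* V)))
    (Matrix.of fun _ _ => (-(ω * υ ^ 2) + I : ℂ) - star lhat ⬝ᵥ V *ᵥ lhat)
  - (Ul lhat)ᴴ * W * Ul lhat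

/-!
Writing `l = l̂ + Δl` homogeneously as `u + t l̂` with `x = (u, t) ∈ ℂ^{N+1}`, the robust
constraint becomes the implication `Q(x) ≥ 0 → P(x) ≤ 0` between the Hermitian forms
`P(x) = lᴴ(W̄+V̄)l − I|t|²` and `Q(x) = υ²|t|² − ‖u‖²`, and the LMI matrix is `−(P + ω Q)`.
So the theorem is the complex S-lemma. For that it suffices that `Q(x) P(y) ≤ Q(y) P(x)`
whenever `Q(x) > 0 > Q(y)`: then `ω = inf {−P(x)/Q(x) | Q(x) > 0}` is nonnegative and
`P + ω Q ≤ 0` everywhere. The inequality comes from the point `z = √(−Q y) x + √(Q x) μ y`,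
where the unimodular `μ` makes the cross term of `Q` purely imaginary and that of `P` have
nonnegative real part: then `Q(z) = 0`, hence `P(z) ≤ 0`.
-/

theorem Complex.exists_norm_eq_one_re_mul_eq_zero_re_mul_nonneg (p q : ℂ) :
    ∃ μ : ℂ, ‖μ‖ = 1 ∧ (μ * q).re = 0 ∧ 0 ≤ (μ * p).re := by
  set ν := I * exp (-(q.arg : ℂ) * I)
  have hν : ‖ν‖ = 1 := by
    simp [ν, ← Complex.ofReal_neg]
  have hνq : (ν * q).re = 0 := by
    conv_lhs => rw [← Complex.norm_mul_exp_arg_mul_I q]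
    rw [show ν * (‖q‖ * exp (q.arg * I))
        = I * ‖q‖ * (exp (-(q.arg : ℂ) * I) * exp (q.arg * I)) by ring, ← Complex.exp_add]
    simp
  rcases le_total 0 (ν * p).re with h | h
  · exact ⟨ν, hν, hνq, h⟩
  · refine ⟨-ν, by rw [norm_neg, hν], ?_, ?_⟩ <;> rw [neg_mul, Complex.neg_re] <;> linarith

theorem exists_nonneg_forall_add_mul_nonpos {X : Type*} {f g : X → ℝ}
    (h : ∀ x, 0 ≤ g x → f x ≤ 0) (hfg : ∀ x y, 0 < g x → g y < 0 → g x * f y ≤ g y * f x)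
    {x₀ : X} (hx₀ : 0 < g x₀) : ∃ ω, 0 ≤ ω ∧ ∀ x, f x + ω * g x ≤ 0 := by
  -- `hfg` says exactly that `f y / -g y ≤ -f x / g x` whenever `g x > 0 > g y`.
  set T := (fun x => -f x / g x) '' {x | 0 < g x}
  have hT : T.Nonempty := ⟨_, x₀, hx₀, rfl⟩
  have hT0 : ∀ r ∈ T, 0 ≤ r := by
    rintro _ ⟨x, hx, rfl⟩
    exact div_nonneg (neg_nonneg.2 (h x hx.le)) hx.le
  refine ⟨sInf T, le_csInf hT hT0, fun x => ?_⟩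
  rcases lt_trichotomy (g x) 0 with hx | hx | hx
  · have : f x / -g x ≤ sInf T := by
      refine le_csInf hT ?_
      rintro _ ⟨y, hy, rfl⟩
      rw [div_le_div_iff₀ (neg_pos.2 hx) hy]
      nlinarith [hfg y x hy hx]
    rw [div_le_iff₀ (neg_pos.2 hx)] at this
    linarith
  · simpa [hx] using h x hx.ge
  · have := csInf_le ⟨0, hT0⟩ ⟨x, hx, rfl⟩
    rw [le_div_iff₀ hx] at this
    linarith

namespace Matrix

variable {n : Type*} [Fintype n]

noncomputable def hermForm (M : Matrix n n ℂ) (x : n → ℂ) : ℝ :=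
  (star x ⬝ᵥ M *ᵥ x).re

theorem hermForm_smul (M : Matrix n n ℂ) (c : ℂ) (x : n → ℂ) :
    hermForm M (c • x) = Complex.normSq c * hermForm M x := by
  rw [hermForm, hermForm, star_smul, mulVec_smul, dotProduct_smul, smul_dotProduct, smul_eq_mul,
    smul_eq_mul, ← mul_assoc, mul_comm c, Complex.star_def, ← Complex.normSq_eq_conj_mul_self,
    Complex.re_ofReal_mul]

theorem hermForm_smul_add_smul {M : Matrix n n ℂ} (hM : M.IsHermitian) (r : ℝ) (c : ℂ)
    (x y : n → ℂ) :
    hermForm M ((r : ℂ) • x + c • y) =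
      r ^ 2 * hermForm M x + Complex.normSq c * hermForm M y
        + 2 * r * (c * (star x ⬝ᵥ M *ᵥ y)).re := by
  have hyx : star y ⬝ᵥ M *ᵥ x = star (star x ⬝ᵥ M *ᵥ y) := by
    rw [star_dotProduct, star_mulVec, hM.eq, dotProduct_mulVec]
  simp only [hermForm, star_add, star_smul, mulVec_add, mulVec_smul, dotProduct_add,
    add_dotProduct, dotProduct_smul, smul_dotProduct, smul_eq_mul, hyx]
  simp only [RCLike.star_def, Complex.conj_ofReal, Complex.add_re, Complex.mul_re,
    Complex.ofReal_re, Complex.ofReal_im, Complex.conj_re, Complex.conj_im, Complex.add_im,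
    Complex.mul_im, Complex.normSq_apply]
  ring

theorem hermForm_sub (A B : Matrix n n ℂ) (x : n → ℂ) :
    hermForm (A - B) x = hermForm A x - hermForm B x := by
  simp [hermForm, sub_mulVec]

theorem hermForm_one [DecidableEq n] (x : n → ℂ) : hermForm 1 x = (star x ⬝ᵥ x).re := by
  rw [hermForm, one_mulVec]

theorem eq_zero_of_hermForm_one_nonpos [DecidableEq n] {x : n → ℂ} (hx : hermForm 1 x ≤ 0) :
    x = 0 := by
  rw [hermForm_one] at hx
  refine dotProduct_star_self_eq_zero.1 (le_antisymm ?_ (dotProduct_star_self_nonneg x))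
  exact Complex.le_def.2 ⟨hx, (Complex.le_def.1 (dotProduct_star_self_nonneg x)).2.symm⟩

theorem hermForm_conjTranspose_mul_mul {m : Type*} [Fintype m] (M : Matrix m m ℂ)
    (B : Matrix m n ℂ) (x : n → ℂ) : hermForm (Bᴴ * M * B) x = hermForm M (B *ᵥ x) := by
  rw [hermForm, hermForm, ← mulVec_mulVec, ← mulVec_mulVec, dotProduct_mulVec, ← star_mulVec]

theorem hermForm_fromBlocks_zero {m : Type*} [Fintype m] (A : Matrix n n ℂ) (D : Matrix m m ℂ)
    (u : n → ℂ) (v : m → ℂ) :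
    hermForm (fromBlocks A 0 0 D) (u ⊕ᵥ v) = hermForm A u + hermForm D v := by
  simp [hermForm, fromBlocks_mulVec, Function.star_sumElim]

theorem hermForm_unit (r : ℝ) (s : Unit → ℂ) :
    hermForm (of fun _ _ => (r : ℂ)) s = r * Complex.normSq (s ()) := by
  simp only [hermForm, dotProduct, mulVec, Fintype.sum_unique, of_apply, Pi.star_apply]
  rw [mul_left_comm, Complex.re_ofReal_mul, Complex.star_def, ← Complex.normSq_eq_conj_mul_self,
    Complex.ofReal_re]

theorem posSemidef_iff_forall_hermForm_nonneg {M : Matrix n n ℂ} (hM : M.IsHermitian) :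
    M.PosSemidef ↔ ∀ x, 0 ≤ hermForm M x := by
  simp only [posSemidef_iff_dotProduct_mulVec, hM, true_and, Complex.nonneg_iff, hermForm]
  exact forall_congr' fun x => and_iff_left (hM.im_star_dotProduct_mulVec_self x).symm

theorem hermForm_mul_le_of_forall {P Q : Matrix n n ℂ} (hP : P.IsHermitian)
    (hQ : Q.IsHermitian) (h : ∀ z, 0 ≤ hermForm Q z → hermForm P z ≤ 0) {x y : n → ℂ}
    (hx : 0 < hermForm Q x) (hy : hermForm Q y < 0) :
    hermForm Q x * hermForm P y ≤ hermForm Q y * hermForm P x := by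
  set a := hermForm Q x with ha
  set b := -hermForm Q y with hb
  obtain ⟨μ, hμ, hμQ, hμP⟩ := Complex.exists_norm_eq_one_re_mul_eq_zero_re_mul_nonneg
    (star x ⬝ᵥ P *ᵥ y) (star x ⬝ᵥ Q *ᵥ y)
  have hnormSq : Complex.normSq ((√a : ℂ) * μ) = a := by
    rw [Complex.normSq_mul, Complex.normSq_ofReal, Real.mul_self_sqrt hx.le,
      Complex.normSq_eq_norm_sq, hμ, one_pow, mul_one]
  set z := ((√b : ℝ) : ℂ) • x + ((√a : ℂ) * μ) • y
  have hQz : hermForm Q z = 0 := by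
    rw [hermForm_smul_add_smul hQ, hnormSq, Real.sq_sqrt (by linarith), mul_assoc (√a : ℂ),
      Complex.re_ofReal_mul, hμQ, ha, hb]
    ring
  have hPz : hermForm P z = b * hermForm P x + a * hermForm P y
      + 2 * √b * √a * (μ * (star x ⬝ᵥ P *ᵥ y)).re := by
    rw [hermForm_smul_add_smul hP, hnormSq, Real.sq_sqrt (by linarith), mul_assoc (√a : ℂ),
      Complex.re_ofReal_mul]
    ring
  have := h z hQz.ge
  nlinarith [mul_nonneg (mul_nonneg (Real.sqrt_nonneg b) (Real.sqrt_nonneg a)) hμP]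

theorem hermForm_s_lemma {P Q : Matrix n n ℂ} (hP : P.IsHermitian) (hQ : Q.IsHermitian)
    {x₀ : n → ℂ} (hx₀ : 0 < hermForm Q x₀) :
    (∀ x, 0 ≤ hermForm Q x → hermForm P x ≤ 0) ↔
      ∃ ω : ℝ, 0 ≤ ω ∧ ∀ x, hermForm P x + ω * hermForm Q x ≤ 0 := by
  refine ⟨fun h => exists_nonneg_forall_add_mul_nonpos h
    (fun x y hx hy => hermForm_mul_le_of_forall hP hQ h hx hy) hx₀, ?_⟩
  rintro ⟨ω, hω, hPQ⟩ x hx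
  nlinarith [hPQ x, mul_nonneg hω hx]

theorem hermForm_le_on_ball_iff_homogenized [DecidableEq n] (A : Matrix n n ℂ) (lhat : n → ℂ)
    (I υ : ℝ) :
    (∀ Δl, hermForm 1 Δl ≤ υ ^ 2 → hermForm A (lhat + Δl) ≤ I) ↔
      ∀ u (t : ℂ), hermForm 1 u ≤ υ ^ 2 * Complex.normSq t →
        hermForm A (u + t • lhat) ≤ I * Complex.normSq t := by
  refine ⟨fun h u t hu => ?_,
    fun h Δl hΔl => by simpa [add_comm] using h Δl 1 (by simpa using hΔl)⟩
  rcases eq_or_ne t 0 with rfl | ht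
  · obtain rfl : u = 0 := eq_zero_of_hermForm_one_nonpos (by simpa using hu)
    simp [hermForm]
  · have hball : hermForm 1 (t⁻¹ • u) ≤ υ ^ 2 := by
      rwa [hermForm_smul, map_inv₀, inv_mul_le_iff₀ (Complex.normSq_pos.2 ht), mul_comm]
    have hscale : u + t • lhat = t • (lhat + t⁻¹ • u) := by
      rw [smul_add, smul_smul, mul_inv_cancel₀ ht, one_smul, add_comm]
    rw [hscale, hermForm_smul, mul_comm I]
    exact mul_le_mul_of_nonneg_left (h _ hball) (Complex.normSq_nonneg t)

end Matrix

section RobustInterference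

variable {N : ℕ}

noncomputable def excessMatrix (W V : Matrix (Fin N) (Fin N) ℂ) (lhat : Fin N → ℂ) (I : ℝ) :
    Matrix (Fin N ⊕ Unit) (Fin N ⊕ Unit) ℂ :=
  (Ul lhat)ᴴ * (W + V) * Ul lhat - fromBlocks 0 0 0 (of fun _ _ => (I : ℂ))

noncomputable def ballMatrix {n : Type*} [DecidableEq n] (υ : ℝ) :
    Matrix (n ⊕ Unit) (n ⊕ Unit) ℂ :=
  fromBlocks (-1) 0 0 (of fun _ _ => ((υ ^ 2 : ℝ) : ℂ))

theorem Ul_mulVec_sumElim (lhat : Fin N → ℂ) (u : Fin N → ℂ) (s : Unit → ℂ) :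
    Ul lhat *ᵥ (u ⊕ᵥ s) = u + s () • lhat := by
  rw [Ul, fromCols_mulVec_sumElim, one_mulVec]
  ext i
  simp [mulVec, dotProduct, mul_comm]

theorem conjTranspose_Ul_mul_mul_Ul (lhat : Fin N → ℂ) (A : Matrix (Fin N) (Fin N) ℂ) :
    (Ul lhat)ᴴ * A * Ul lhat
      = fromBlocks A (replicateCol Unit (A *ᵥ lhat)) (replicateRow Unit (star lhat ᵥ* A))
          (of fun _ _ => star lhat ⬝ᵥ A *ᵥ lhat) := by
  rw [Ul, conjTranspose_fromCols_eq_fromRows_conjTranspose, conjTranspose_one,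
    conjTranspose_replicateCol, fromRows_mul, Matrix.one_mul, fromRows_mul_fromCols,
    Matrix.mul_one, Matrix.mul_one, ← replicateCol_mulVec, ← replicateRow_vecMul,
    replicateRow_mul_replicateCol, ← dotProduct_mulVec]

theorem hermForm_excessMatrix (W V : Matrix (Fin N) (Fin N) ℂ) (lhat : Fin N → ℂ) (I : ℝ)
    (u : Fin N → ℂ) (s : Unit → ℂ) :
    hermForm (excessMatrix W V lhat I) (u ⊕ᵥ s)
      = hermForm (W + V) (u + s () • lhat) - I * Complex.normSq (s ()) := by
  rw [excessMatrix, hermForm_sub, hermForm_conjTranspose_mul_mul, Ul_mulVec_sumElim,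
    hermForm_fromBlocks_zero, hermForm_unit]
  simp [hermForm]

theorem hermForm_ballMatrix {n : Type*} [Fintype n] [DecidableEq n] (υ : ℝ) (u : n → ℂ)
    (s : Unit → ℂ) :
    hermForm (ballMatrix υ) (u ⊕ᵥ s) = υ ^ 2 * Complex.normSq (s ()) - hermForm 1 u := by
  rw [ballMatrix, hermForm_fromBlocks_zero, hermForm_unit]
  simp only [hermForm, neg_mulVec, one_mulVec, dotProduct_neg, Complex.neg_re]
  ring

theorem isHermitian_excessMatrix {W V : Matrix (Fin N) (Fin N) ℂ} (hW : W.IsHermitian)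
    (hV : V.IsHermitian) (lhat : Fin N → ℂ) (I : ℝ) : (excessMatrix W V lhat I).IsHermitian := by
  refine (isHermitian_conjTranspose_mul_mul _ (hW.add hV)).sub
    (isHermitian_zero.fromBlocks (by simp) ?_)
  ext
  simp

theorem isHermitian_ballMatrix {n : Type*} [DecidableEq n] (υ : ℝ) :
    (ballMatrix (n := n) υ).IsHermitian := by
  refine isHermitian_one.neg.fromBlocks (by simp) ?_
  ext
  simp

theorem SC11_eq_neg_excessMatrix_add (W V : Matrix (Fin N) (Fin N) ℂ) (lhat : Fin N → ℂ)
    (I ω υ : ℝ) :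
    SC11 W V lhat I ω υ = -(excessMatrix W V lhat I + (ω : ℂ) • ballMatrix υ) := by
  rw [SC11, excessMatrix, ballMatrix, Matrix.mul_add, Matrix.add_mul,
    conjTranspose_Ul_mul_mul_Ul lhat V]
  ext (i | i) (j | j) <;> simp [fromBlocks, one_apply] <;> ring

theorem robust_iff_forall_excessMatrix_nonpos (W V : Matrix (Fin N) (Fin N) ℂ)
    (lhat : Fin N → ℂ) (I υ : ℝ) :
    (∀ Δl : Fin N → ℂ, (star Δl ⬝ᵥ Δl).re ≤ υ ^ 2 →
        (star (lhat + Δl) ⬝ᵥ (W + V) *ᵥ (lhat + Δl)).re ≤ I) ↔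
      ∀ x, 0 ≤ hermForm (ballMatrix υ) x → hermForm (excessMatrix W V lhat I) x ≤ 0 := by
  simp only [← hermForm_one]
  refine (hermForm_le_on_ball_iff_homogenized (W + V) lhat I υ).trans
    ⟨fun h x hx => ?_, fun h u t hu => ?_⟩
  · rw [← Sum.elim_comp_inl_inr x, hermForm_ballMatrix] at hx
    rw [← Sum.elim_comp_inl_inr x, hermForm_excessMatrix]
    linarith [h _ _ (sub_nonneg.1 hx)]
  · have := h (u ⊕ᵥ fun _ => t) (by rw [hermForm_ballMatrix]; linarith)
    rw [hermForm_excessMatrix] at this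
    linarith

theorem posSemidef_SC11_iff {W V : Matrix (Fin N) (Fin N) ℂ} (hW : W.IsHermitian)
    (hV : V.IsHermitian) (lhat : Fin N → ℂ) (I ω υ : ℝ) :
    (SC11 W V lhat I ω υ).PosSemidef ↔
      ∀ x, hermForm (excessMatrix W V lhat I) x + ω * hermForm (ballMatrix υ) x ≤ 0 := by
  rw [SC11_eq_neg_excessMatrix_add, posSemidef_iff_forall_hermForm_nonneg
    ((isHermitian_excessMatrix hW hV lhat I).add
      ((isHermitian_ballMatrix υ).smul (Complex.conj_ofReal ω))).neg]
  refine forall_congr' fun x => ?_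
  simp [hermForm, add_mulVec, neg_mulVec, smul_mulVec, le_neg_iff_add_nonpos_right]

end RobustInterference

theorem robust_interference_lmi_general {N : ℕ}
    (W V : Matrix (Fin N) (Fin N) ℂ) (hW : W.IsHermitian) (hV : V.IsHermitian)
    (lhat : Fin N → ℂ) (I : ℝ) (υ : ℝ) (hυ : 0 < υ) :
    (∀ Δl : Fin N → ℂ, (star Δl ⬝ᵥ Δl).re ≤ υ ^ 2 →
        (star (lhat + Δl) ⬝ᵥ (W + V) *ᵥ (lhat + Δl)).re ≤ I) ↔
      ∃ ω : ℝ, 0 ≤ ω ∧ (SC11 W V lhat I ω υ).PosSemidef := by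
  have hx₀ : 0 < hermForm (ballMatrix υ) ((0 : Fin N → ℂ) ⊕ᵥ fun _ => 1) := by
    rw [hermForm_ballMatrix]
    simp only [map_one, mul_one, hermForm, star_zero, mulVec_zero, dotProduct_zero,
      Complex.zero_re, sub_zero]
    positivity
  rw [robust_iff_forall_excessMatrix_nonpos,
    hermForm_s_lemma (isHermitian_excessMatrix hW hV lhat I) (isHermitian_ballMatrix υ) hx₀]
  simp only [posSemidef_SC11_iff hW hV]

/-- S-procedure form of the robust interference constraint: the robust constraint
`lᴴ (W̄ + V̄) l ≤ I` for all `l = l̂ + Δl` with `‖Δl‖² ≤ υ²` holds iff there exists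
`ω ≥ 0` making the associated LMI matrix positive semidefinite. -/
theorem robust_interference_lmi {N : ℕ} (hN : 1 ≤ N)
    (W V : Matrix (Fin N) (Fin N) ℂ) (hW : W.IsHermitian) (hV : V.IsHermitian)
    (lhat : Fin N → ℂ) (I : ℝ) (υ : ℝ) (hυ : 0 < υ) :
    (∀ Δl : Fin N → ℂ, (star Δl ⬝ᵥ Δl).re ≤ υ ^ 2 →
        (star (lhat + Δl) ⬝ᵥ (W + V) *ᵥ (lhat + Δl)).re ≤ I) ↔
      ∃ ω : ℝ, 0 ≤ ω ∧ (SC11 W V lhat I ω υ).PosSemidef :=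
  robust_interference_lmi_general W V hW hV lhat I υ hυ
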